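/- There exist 4×4 complex matrices π⁰ and π¹ forming a projective measurement (π⁰ and π¹ are orthogonal projections, i.e., Hermitian idempotents, with π⁰ + π¹ = 1) such that (1/4) · Σ_{H : Fin 2 → Fin 2} ‖ (π^{H 0} ⊗ π^{H 0}) · (O_H ⊗ O_H) · ψ ‖² = 9/16, where the sum runs over all four functions H : Fin 2 → Fin 2; moreover, the simultaneous query-extraction probability vanishes: (R ⊗ R) ψ = 0, where R = e_{(0,0)} e_{(0,0)}† + e_{(0,1)} e_{(0,1)}† is the orthogonal projection of ℂ^4 onto the states whose first (query-input) qubit equals 0. In words: two non-communicating parties sharing ψ, each making a single query to a uniformly random oracle H : {0,1} → {0,1}, can simultaneously output H(0) with probability 9/16 > 1/2, yet measuring the query-input registers of both parties never simultaneously yields the input 0; hence the constant 9 in the simultaneous one-way-to-hiding lemma cannot be improved below 9/8. -/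

import Mathlib

/-!
The oracle fixes `u = |1⟩|+⟩` and maps `e_{(0,0)}` to `e_{(0,H 0)}`, so after the queries the state
is the symmetrisation `(e_{(0,H 0)} ⊗ u + u ⊗ e_{(0,H 0)})/√2`. For a projection `Q`, the success
probability on `(a ⊗ c + c ⊗ a)/√2` is `⟨a,Qa⟩⟨c,Qc⟩ + |⟨a,Qc⟩|²`. In the orthonormal triple
`e_{(0,0)}, e_{(0,1)}, u` let `π⁰` project onto the span of `e_{(0,0)}` and
`w = ½ e_{(0,1)} + (√3/2) u`, and `π¹ = 1 - π⁰`. If `H 0 = 0` the success probability is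
`1 · 3/4 + 0 = 3/4`, if `H 0 = 1` it is `3/4 · 1/4 + 3/16 = 3/8`, so the average is `9/16`.
On the other hand `R` annihilates `u`, which occurs in each term of `ψ`, so `(R ⊗ R) ψ = 0`.
-/

open Matrix Kronecker

/-- Standard basis vector `e_{(x,y)}` of the two-qubit space `ℂ^4 = ℂ^{Fin 2 × Fin 2}`. -/
def e2 (x y : Fin 2) : Fin 2 × Fin 2 → ℂ :=
  fun p => if p = (x, y) then 1 else 0

/-- The oracle unitary `O_H`, determined by `O_H e_{(x,y)} = e_{(x, y + H x)}`. -/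
def oracleU (H : Fin 2 → Fin 2) : Matrix (Fin 2 × Fin 2) (Fin 2 × Fin 2) ℂ :=
  fun p q => if p.1 = q.1 ∧ p.2 = q.2 + H q.1 then 1 else 0

/-- The vector `u = |1⟩⊗|+⟩ = (e_{(1,0)} + e_{(1,1)})/√2`. -/
noncomputable def uVec : Fin 2 × Fin 2 → ℂ :=
  fun p => (e2 1 0 p + e2 1 1 p) / ((Real.sqrt 2 : ℝ) : ℂ)

/-- Kronecker (tensor) product of two vectors in `ℂ^4`. -/
def tensVec (v w : Fin 2 × Fin 2 → ℂ) : (Fin 2 × Fin 2) × (Fin 2 × Fin 2) → ℂ :=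
  fun p => v p.1 * w p.2

/-- The shared state `ψ = (1/√2)(e_{(0,0)} ⊗ u + u ⊗ e_{(0,0)})`. -/
noncomputable def psiVec : (Fin 2 × Fin 2) × (Fin 2 × Fin 2) → ℂ :=
  ((1 / (Real.sqrt 2 : ℝ) : ℝ) : ℂ) • (tensVec (e2 0 0) uVec + tensVec uVec (e2 0 0))

/-- The projection `R = e_{(0,0)}e_{(0,0)}† + e_{(0,1)}e_{(0,1)}†` onto the states whose
query-input qubit equals `0`. -/
def extractR : Matrix (Fin 2 × Fin 2) (Fin 2 × Fin 2) ℂ :=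
  Matrix.vecMulVec (e2 0 0) (star (e2 0 0)) + Matrix.vecMulVec (e2 0 1) (star (e2 0 1))

section StarProjection

variable {n R : Type*} [Fintype n] [CommSemiring R] [StarRing R]

lemma vecMulVec_star_mul_vecMulVec_star {v w : n → R} (h : star v ⬝ᵥ w = 0) :
    vecMulVec v (star v) * vecMulVec w (star w) = 0 := by
  rw [vecMulVec_mul_vecMulVec, h, zero_smul, vecMulVec_zero]

lemma isStarProjection_vecMulVec_star {v : n → R} (hv : star v ⬝ᵥ v = 1) :
    IsStarProjection (vecMulVec v (star v)) where
  isIdempotentElem := by rw [IsIdempotentElem, vecMulVec_mul_vecMulVec, hv, one_smul]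
  isSelfAdjoint := by
    rw [IsSelfAdjoint, star_eq_conjTranspose, conjTranspose_vecMulVec, star_star]

lemma star_dotProduct_vecMulVec_star_mulVec (x v y : n → R) :
    star x ⬝ᵥ (vecMulVec v (star v) *ᵥ y) = (star x ⬝ᵥ v) * (star v ⬝ᵥ y) := by
  rw [vecMulVec_mulVec, op_smul_eq_smul, dotProduct_smul, smul_eq_mul, mul_comm]

lemma IsStarProjection.star_mulVec_dotProduct_mulVec {Q : Matrix n n R}
    (hQ : IsStarProjection Q) (a c : n → R) : star (Q *ᵥ a) ⬝ᵥ (Q *ᵥ c) = star a ⬝ᵥ (Q *ᵥ c) := by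
  rw [star_mulVec, ← dotProduct_mulVec, mulVec_mulVec, ← star_eq_conjTranspose,
    hQ.isSelfAdjoint.star_eq, hQ.isIdempotentElem.eq]

end StarProjection

lemma ofReal_sqrt_ofNat_sq (n : ℕ) [n.AtLeastTwo] :
    ((Real.sqrt (OfNat.ofNat n) : ℝ) : ℂ) ^ 2 = OfNat.ofNat n := by
  rw [← Complex.ofReal_pow, Real.sq_sqrt (Nat.ofNat_nonneg _), Complex.ofReal_ofNat]

lemma ofReal_sum_normSq {ι : Type*} [Fintype ι] (x : ι → ℂ) :
    ((∑ p, Complex.normSq (x p) : ℝ) : ℂ) = star x ⬝ᵥ x := by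
  simp [dotProduct, Complex.normSq_eq_conj_mul_self]

lemma kronecker_mulVec_tensVec (A B : Matrix (Fin 2 × Fin 2) (Fin 2 × Fin 2) ℂ)
    (v w : Fin 2 × Fin 2 → ℂ) : (A ⊗ₖ B) *ᵥ tensVec v w = tensVec (A *ᵥ v) (B *ᵥ w) := by
  ext ⟨p, q⟩
  simp only [mulVec, dotProduct, tensVec, kroneckerMap_apply]
  rw [Fintype.sum_prod_type, Finset.sum_mul_sum]
  exact Finset.sum_congr rfl fun r _ => Finset.sum_congr rfl fun s _ => by ring

lemma star_tensVec_dotProduct_tensVec (a c a' c' : Fin 2 × Fin 2 → ℂ) :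
    star (tensVec a c) ⬝ᵥ tensVec a' c' = (star a ⬝ᵥ a') * (star c ⬝ᵥ c') := by
  simp only [dotProduct, tensVec, Pi.star_apply, star_mul']
  rw [Fintype.sum_prod_type, Finset.sum_mul_sum]
  exact Finset.sum_congr rfl fun r _ => Finset.sum_congr rfl fun s _ => by ring

lemma kronecker_self_mulVec_psiVec (A : Matrix (Fin 2 × Fin 2) (Fin 2 × Fin 2) ℂ) :
    (A ⊗ₖ A) *ᵥ psiVec = ((1 / Real.sqrt 2 : ℝ) : ℂ) •
      (tensVec (A *ᵥ e2 0 0) (A *ᵥ uVec) + tensVec (A *ᵥ uVec) (A *ᵥ e2 0 0)) := by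
  rw [psiVec, mulVec_smul, mulVec_add, kronecker_mulVec_tensVec, kronecker_mulVec_tensVec]

lemma sum_normSq_symmetrized_tensVec (a c : Fin 2 × Fin 2 → ℂ) :
    ((∑ p, Complex.normSq ((((1 / Real.sqrt 2 : ℝ) : ℂ) •
        (tensVec a c + tensVec c a)) p) : ℝ) : ℂ) =
      (star a ⬝ᵥ a) * (star c ⬝ᵥ c) + (star a ⬝ᵥ c) * (star c ⬝ᵥ a) := by
  have hscale : Complex.normSq ((1 / Real.sqrt 2 : ℝ) : ℂ) = 1 / 2 := by
    rw [Complex.normSq_ofReal, ← sq, div_pow, Real.sq_sqrt zero_le_two, one_pow]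
  simp only [Pi.smul_apply, smul_eq_mul, Complex.normSq_mul, hscale, ← Finset.mul_sum]
  rw [Complex.ofReal_mul, ofReal_sum_normSq, star_add, add_dotProduct, dotProduct_add,
    dotProduct_add]
  simp only [star_tensVec_dotProduct_tensVec]
  push_cast
  ring

lemma IsStarProjection.sum_normSq_symmetrized_tensVec_mulVec
    {Q : Matrix (Fin 2 × Fin 2) (Fin 2 × Fin 2) ℂ}
    (hQ : IsStarProjection Q) (a c : Fin 2 × Fin 2 → ℂ) :
    ((∑ p, Complex.normSq ((((1 / Real.sqrt 2 : ℝ) : ℂ) •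
        (tensVec (Q *ᵥ a) (Q *ᵥ c) + tensVec (Q *ᵥ c) (Q *ᵥ a))) p) : ℝ) : ℂ) =
      (star a ⬝ᵥ (Q *ᵥ a)) * (star c ⬝ᵥ (Q *ᵥ c)) +
        (star a ⬝ᵥ (Q *ᵥ c)) * (star c ⬝ᵥ (Q *ᵥ a)) := by
  simp only [sum_normSq_symmetrized_tensVec, hQ.star_mulVec_dotProduct_mulVec]

lemma star_e2_dotProduct (x y : Fin 2) (v : Fin 2 × Fin 2 → ℂ) :
    star (e2 x y) ⬝ᵥ v = v (x, y) := by
  simp [dotProduct, e2]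

lemma uVec_eq : uVec = ((Real.sqrt 2 : ℝ) : ℂ)⁻¹ • (e2 1 0 + e2 1 1) := by
  ext p
  simp [uVec, div_eq_inv_mul]

lemma star_uVec_dotProduct (v : Fin 2 × Fin 2 → ℂ) :
    star uVec ⬝ᵥ v = ((Real.sqrt 2 : ℝ) : ℂ)⁻¹ * (v (1, 0) + v (1, 1)) := by
  simp [uVec_eq, star_e2_dotProduct, smul_dotProduct, mul_add]

lemma star_uVec_dotProduct_uVec : star uVec ⬝ᵥ uVec = 1 := by
  have hne : ((Real.sqrt 2 : ℝ) : ℂ) ≠ 0 := by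
    exact_mod_cast (Real.sqrt_pos.mpr zero_lt_two).ne'
  rw [star_uVec_dotProduct]
  simp only [uVec, e2, Fin.isValue, ↓reduceIte, Prod.mk.injEq, zero_ne_one, and_false, add_zero,
    one_div, one_ne_zero, zero_add]
  field_simp
  linear_combination -ofReal_sqrt_ofNat_sq 2

lemma oracleU_mulVec_e2 (H : Fin 2 → Fin 2) (x y : Fin 2) :
    oracleU H *ᵥ e2 x y = e2 x (y + H x) := by
  ext p
  simp only [mulVec, dotProduct, oracleU, e2, mul_ite, mul_one, mul_zero, Finset.sum_ite_eq',
    Finset.mem_univ, if_true]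
  simp [Prod.ext_iff]

lemma oracleU_mulVec_uVec (H : Fin 2 → Fin 2) : oracleU H *ᵥ uVec = uVec := by
  rw [uVec_eq, mulVec_smul, mulVec_add, oracleU_mulVec_e2, oracleU_mulVec_e2]
  rcases Fin.exists_fin_two.mp ⟨H 1, rfl⟩ with h | h <;> rw [h]
  · rfl
  · rw [add_comm (e2 1 _)]
    rfl

lemma extractR_mulVec (v : Fin 2 × Fin 2 → ℂ) :
    extractR *ᵥ v = v (0, 0) • e2 0 0 + v (0, 1) • e2 0 1 := by
  simp only [extractR, add_mulVec, vecMulVec_mulVec, op_smul_eq_smul, star_e2_dotProduct]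

lemma extractR_mulVec_uVec : extractR *ᵥ uVec = 0 := by
  ext
  simp [extractR_mulVec, uVec, e2]

noncomputable def wVec : Fin 2 × Fin 2 → ℂ :=
  (1 / 2 : ℂ) • e2 0 1 + ((Real.sqrt 3 / 2 : ℝ) : ℂ) • uVec

noncomputable def projZero : Matrix (Fin 2 × Fin 2) (Fin 2 × Fin 2) ℂ :=
  vecMulVec (e2 0 0) (star (e2 0 0)) + vecMulVec wVec (star wVec)

noncomputable def measurement : Fin 2 → Matrix (Fin 2 × Fin 2) (Fin 2 × Fin 2) ℂ :=
  ![projZero, 1 - projZero]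

lemma star_uVec_dotProduct_e2_zero (y : Fin 2) : star uVec ⬝ᵥ e2 0 y = 0 := by
  simp [star_uVec_dotProduct, e2]

lemma star_wVec_dotProduct (v : Fin 2 × Fin 2 → ℂ) :
    star wVec ⬝ᵥ v = 1 / 2 * v (0, 1) + (Real.sqrt 3 / 2 : ℝ) * (star uVec ⬝ᵥ v) := by
  simp [wVec, add_dotProduct, smul_dotProduct, star_e2_dotProduct]

lemma star_dotProduct_wVec (v : Fin 2 × Fin 2 → ℂ) :
    star v ⬝ᵥ wVec =
      1 / 2 * star v ⬝ᵥ e2 0 1 + (Real.sqrt 3 / 2 : ℝ) * (star v ⬝ᵥ uVec) := by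
  simp [wVec, dotProduct_add, dotProduct_smul]

lemma star_wVec_dotProduct_wVec : star wVec ⬝ᵥ wVec = 1 := by
  simp [star_dotProduct_wVec, star_wVec_dotProduct, star_uVec_dotProduct_e2_zero,
    star_uVec_dotProduct_uVec, uVec, e2]
  linear_combination ofReal_sqrt_ofNat_sq 3 / 4

lemma isStarProjection_projZero : IsStarProjection projZero := by
  have horth : star (e2 0 0) ⬝ᵥ wVec = 0 := by
    simp [star_dotProduct_wVec, star_e2_dotProduct, uVec, e2]
  refine (isStarProjection_vecMulVec_star ?_).add
    (isStarProjection_vecMulVec_star star_wVec_dotProduct_wVec)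
    (vecMulVec_star_mul_vecMulVec_star horth)
  simp [star_e2_dotProduct, e2]

lemma isStarProjection_measurement (b : Fin 2) : IsStarProjection (measurement b) := by
  fin_cases b
  exacts [isStarProjection_projZero, isStarProjection_projZero.one_sub]

lemma star_dotProduct_projZero_mulVec (x y : Fin 2 × Fin 2 → ℂ) :
    star x ⬝ᵥ (projZero *ᵥ y) =
      (star x ⬝ᵥ e2 0 0) * (star (e2 0 0) ⬝ᵥ y) + (star x ⬝ᵥ wVec) * (star wVec ⬝ᵥ y) := by
  rw [projZero, add_mulVec, dotProduct_add, star_dotProduct_vecMulVec_star_mulVec,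
    star_dotProduct_vecMulVec_star_mulVec]

lemma sum_normSq_measurement (b : Fin 2) :
    ∑ p, Complex.normSq ((((1 / Real.sqrt 2 : ℝ) : ℂ) •
        (tensVec (measurement b *ᵥ e2 0 b) (measurement b *ᵥ uVec) +
          tensVec (measurement b *ᵥ uVec) (measurement b *ᵥ e2 0 b))) p) =
      ![3 / 4, 3 / 8] b := by
  apply Complex.ofReal_injective
  rw [(isStarProjection_measurement b).sum_normSq_symmetrized_tensVec_mulVec]
  fin_cases b
  · simp [measurement, star_dotProduct_projZero_mulVec, star_dotProduct_wVec,
      star_wVec_dotProduct, star_e2_dotProduct, star_uVec_dotProduct_e2_zero,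
      star_uVec_dotProduct_uVec, uVec, e2]
    linear_combination ofReal_sqrt_ofNat_sq 3 / 4
  · simp [measurement, sub_mulVec, dotProduct_sub, star_dotProduct_projZero_mulVec,
      star_dotProduct_wVec, star_wVec_dotProduct, star_e2_dotProduct, star_uVec_dotProduct_e2_zero,
      star_uVec_dotProduct_uVec, uVec, e2]
    linear_combination -ofReal_sqrt_ofNat_sq 3 / 8

lemma sum_normSq_measurement_oracle (H : Fin 2 → Fin 2) :
    ∑ p, Complex.normSq
      ((((measurement (H 0) ⊗ₖ measurement (H 0)) * (oracleU H ⊗ₖ oracleU H)) *ᵥ psiVec) p) =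
      ![3 / 4, 3 / 8] (H 0) := by
  rw [← mul_kronecker_mul, kronecker_self_mulVec_psiVec, ← mulVec_mulVec, ← mulVec_mulVec,
    oracleU_mulVec_e2, zero_add, oracleU_mulVec_uVec]
  exact sum_normSq_measurement (H 0)

lemma sum_fin_two_fun_apply_zero {M : Type*} [AddCommMonoid M] (f : Fin 2 → M) :
    ∑ H : Fin 2 → Fin 2, f (H 0) = 2 • (f 0 + f 1) := by
  rw [← (piFinTwoEquiv fun _ => Fin 2).symm.sum_comp, Fintype.sum_prod_type]
  simp [Fin.sum_univ_two, two_nsmul]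

/-- Counter-example for the simultaneous O2H lemma: there is a projective measurement
`{π⁰, π¹}` such that, averaging over the four oracles `H : Fin 2 → Fin 2`, both parties
simultaneously output `H(0)` with probability exactly `9/16 > 1/2`, while the simultaneous
query-extraction probability vanishes: `(R ⊗ R) ψ = 0`. -/
theorem simultaneous_O2H_counterexample :
    ∃ pim : Fin 2 → Matrix (Fin 2 × Fin 2) (Fin 2 × Fin 2) ℂ,
      (∀ b, (pim b)ᴴ = pim b) ∧ (∀ b, pim b * pim b = pim b) ∧
      pim 0 + pim 1 = 1 ∧
      (1 / 4 : ℝ) * ∑ H : Fin 2 → Fin 2,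
          (∑ p, Complex.normSq
            ((((pim (H 0) ⊗ₖ pim (H 0)) * (oracleU H ⊗ₖ oracleU H)) *ᵥ psiVec) p)) = 9 / 16 ∧
      (extractR ⊗ₖ extractR) *ᵥ psiVec = 0 := by
  refine ⟨measurement, fun b => (isStarProjection_measurement b).isSelfAdjoint,
    fun b => (isStarProjection_measurement b).isIdempotentElem, by simp [measurement], ?_, ?_⟩
  · simp_rw [sum_normSq_measurement_oracle,
      sum_fin_two_fun_apply_zero (![3 / 4, 3 / 8] : Fin 2 → ℝ)]
    norm_num
  · rw [kronecker_self_mulVec_psiVec, extractR_mulVec_uVec]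
    ext
    simp [tensVec]
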